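/- Let C be a nonempty closed convex subset of a real Hilbert space H. Let f1, f2 : C × C → ℝ be bifunctions satisfying (A1)–(A4) and let T1, …, Td : C → C be continuous quasi-nonexpansive mappings. Assume F := [⋂_{j=1}^d F(Tj)] ∩ [⋂_{k=1}^2 EP(fk)] ≠ ∅. Define: x_0 ∈ C_0 = C arbitrary; y_n = α_n x_n + (1−α_n) T_{n+1} x_n; u_n, v_n ∈ C with f1(u_n, y) + (1/r_n)⟨y − u_n, u_n − y_n⟩ ≥ 0 for all y ∈ C and f2(v_n, y) + (1/r_n)⟨y − v_n, v_n − y_n⟩ ≥ 0 for all y ∈ C; w_n = β u_n + (1−β) v_n; C_{n+1} = {z ∈ C_n : ‖z − w_n‖ ≤ ‖z − x_n‖}; x_{n+1} = P_{C_{n+1}}(x_0), where the index of T cycles modulo d, {r_n} ⊂ [c₁, ∞) for some c₁ > 0, β ∈ (0,1), and α_n ∈ (0,1) with liminf α_n(1 − α_n) > 0. Then {x_n} converges strongly to a point of F. -/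

import Mathlib

open Filter Topology RealInnerProductSpace

noncomputable section

variable {H : Type*} [NormedAddCommGroup H] [InnerProductSpace ℝ H]

/-- `P` is the metric (nearest-point) projection onto nonempty closed convex sets. -/
def IsMetricProjection (P : Set H → H → H) : Prop :=
  ∀ K : Set H, K.Nonempty → IsClosed K → Convex ℝ K → ∀ y,
    P K y ∈ K ∧ ∀ z ∈ K, ‖P K y - y‖ ≤ ‖z - y‖

/-- Quasi-nonexpansive mapping: `F(T) ≠ ∅` and `‖Tx − p‖ ≤ ‖x − p‖` for `p ∈ F(T)`. -/
def QuasiNonexpansive (C : Set H) (T : H → H) : Prop :=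
  (∃ p ∈ C, T p = p) ∧ ∀ p ∈ C, T p = p → ∀ x ∈ C, ‖T x - p‖ ≤ ‖x - p‖

/-- Monotone mapping on `C`. -/
def MonotoneMapOn (C : Set H) (B : H → H) : Prop :=
  ∀ x ∈ C, ∀ y ∈ C, 0 ≤ ⟪x - y, B x - B y⟫

/-- `γ`-inverse strongly monotone mapping on `C`. -/
def InvStronglyMonotoneOn (C : Set H) (γ : ℝ) (A : H → H) : Prop :=
  ∀ x ∈ C, ∀ y ∈ C, γ * ‖A x - A y‖ ^ 2 ≤ ⟪x - y, A x - A y⟫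

/-- Conditions (A1)–(A4) on a bifunction `f : C × C → ℝ`. -/
def BifunConds (C : Set H) (f : H → H → ℝ) : Prop :=
  (∀ x ∈ C, f x x = 0) ∧
    (∀ x ∈ C, ∀ y ∈ C, f x y + f y x ≤ 0) ∧
    (∀ x ∈ C, ∀ y ∈ C, ∀ z ∈ C,
      Filter.limsup (fun t : ℝ => f (t • z + (1 - t) • x) y) (𝓝[>] (0 : ℝ)) ≤ f x y) ∧
    (∀ x ∈ C, ConvexOn ℝ C (f x) ∧ LowerSemicontinuousOn (f x) C)

/-- Solution set of the generalized equilibrium problem `GEP(f, B)`. -/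
def GEPset (C : Set H) (f : H → H → ℝ) (B : H → H) : Set H :=
  {u ∈ C | ∀ v ∈ C, 0 ≤ f u v + ⟪B u, v - u⟫}

/-- Solution set of the equilibrium problem `EP(f)`. -/
def EPset (C : Set H) (f : H → H → ℝ) : Set H :=
  {u ∈ C | ∀ v ∈ C, 0 ≤ f u v}

/-- Solution set of the variational inequality `VI(B, C)`. -/
def VIset (C : Set H) (B : H → H) : Set H :=
  {u ∈ C | ∀ v ∈ C, 0 ≤ ⟪B u, v - u⟫}

/-!
For `p ∈ F`, quasi-nonexpansiveness of `T j` and the firm nonexpansiveness of the two resolvents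
give `‖w n - p‖ ≤ ‖x n - p‖`, with a defect controlling `‖u n - y n‖`, `‖v n - y n‖` and
`‖x n - T (x n)‖`; so the half-spaces cut out by `Cs` never remove `F`. As `x (n + 1)` is the nearest
point to `x 0` in the decreasing convex sets `Cs (n + 1)`, the distances `‖x n - x 0‖` increase,
are bounded by `‖p - x 0‖`, and the obtuse-angle inequality of the projection makes `x` Cauchy.
Its limit `q` is also the limit of `w`, so all defects tend to zero. Each index recurs in the
cyclic order, so `q` is fixed by every `T j`; and the resolvent inequalities pass to the limit as
`f z q ≤ 0` on `C`, which by (A1), (A3), (A4) (Minty's argument) puts `q` in `EP(f1) ∩ EP(f2)`.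
-/

theorem norm_smul_add_one_sub_smul_sq (a b : H) (t : ℝ) :
    ‖t • a + (1 - t) • b‖ ^ 2 = t * ‖a‖ ^ 2 + (1 - t) * ‖b‖ ^ 2 - t * (1 - t) * ‖a - b‖ ^ 2 := by
  simp only [← real_inner_self_eq_norm_sq, inner_add_add_self, inner_sub_sub_self,
    real_inner_smul_left, real_inner_smul_right, real_inner_comm b a]
  ring

theorem convex_setOf_norm_sub_le_norm_sub (a b : H) : Convex ℝ {z : H | ‖z - a‖ ≤ ‖z - b‖} := by
  have hset : {z : H | ‖z - a‖ ≤ ‖z - b‖} = {z | ⟪b - a, z⟫ ≤ (‖b‖ ^ 2 - ‖a‖ ^ 2) / 2} := by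
    ext z
    simp only [Set.mem_ofPred_eq, ← sq_le_sq₀ (norm_nonneg _) (norm_nonneg _),
      norm_sub_sq_real, inner_sub_left, real_inner_comm z]
    constructor <;> intro h <;> linarith
  rw [hset]
  exact convex_halfSpace_le (innerₗ H (b - a)).isLinear _

theorem sq_norm_sub_add_sq_norm_sub_le_of_forall_norm_sub_le {K : Set H} (hK : Convex ℝ K)
    {x₀ q : H} (hq : q ∈ K) (hmin : ∀ z ∈ K, ‖q - x₀‖ ≤ ‖z - x₀‖) {z : H} (hz : z ∈ K) :
    ‖z - q‖ ^ 2 + ‖q - x₀‖ ^ 2 ≤ ‖z - x₀‖ ^ 2 := by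
  have : Nonempty K := ⟨⟨q, hq⟩⟩
  have hinf : ‖x₀ - q‖ = ⨅ w : K, ‖x₀ - w‖ :=
    le_antisymm (le_ciInf fun w => by simpa only [norm_sub_rev x₀] using hmin w w.2)
      (ciInf_le (f := fun w : K => ‖x₀ - w‖)
        ⟨0, Set.forall_mem_range.2 fun w => norm_nonneg _⟩ ⟨q, hq⟩)
  have hobtuse := (norm_eq_iInf_iff_real_inner_le_zero hK hq).1 hinf z hz
  have hsplit : z - x₀ = (z - q) - (x₀ - q) := by abel
  rw [hsplit, norm_sub_sq_real (z - q), real_inner_comm, norm_sub_rev x₀]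
  linarith

theorem sq_norm_sub_add_sq_norm_sub_le_of_resolvent {C : Set H} {f : H → H → ℝ}
    (hmono : ∀ x ∈ C, ∀ y ∈ C, f x y + f y x ≤ 0) {p u y : H} {r : ℝ} (hr : 0 < r)
    (hp : p ∈ EPset C f) (hu : u ∈ C) (hres : ∀ z ∈ C, 0 ≤ f u z + (1 / r) * ⟪z - u, u - y⟫) :
    ‖u - p‖ ^ 2 + ‖u - y‖ ^ 2 ≤ ‖y - p‖ ^ 2 := by
  have hinner : 0 ≤ ⟪p - u, u - y⟫ :=
    nonneg_of_mul_nonneg_right (by linarith [hres p hp.1, hmono u hu p hp.1, hp.2 u hu])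
      (one_div_pos.2 hr)
  have hsplit : y - p = -(u - y) - (p - u) := by abel
  rw [hsplit, norm_sub_sq_real (-(u - y)), norm_neg, inner_neg_left, real_inner_comm,
    norm_sub_rev p]
  linarith

theorem hybrid_step_estimate {x t y u v w p : H} {a β : ℝ} (ha : a ∈ Set.Icc 0 1)
    (hβ : β ∈ Set.Icc 0 1) (hy : y = a • x + (1 - a) • t) (hw : w = β • u + (1 - β) • v)
    (ht : ‖t - p‖ ≤ ‖x - p‖) (hu : ‖u - p‖ ^ 2 + ‖u - y‖ ^ 2 ≤ ‖y - p‖ ^ 2)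
    (hv : ‖v - p‖ ^ 2 + ‖v - y‖ ^ 2 ≤ ‖y - p‖ ^ 2) :
    ‖w - p‖ ≤ ‖x - p‖ ∧ β * ‖u - y‖ ^ 2 + (1 - β) * ‖v - y‖ ^ 2 + a * (1 - a) * ‖x - t‖ ^ 2 ≤
      ‖x - p‖ ^ 2 - ‖w - p‖ ^ 2 := by
  obtain ⟨ha₀, ha₁⟩ := ha
  obtain ⟨hβ₀, hβ₁⟩ := hβ
  have hy' : ‖y - p‖ ^ 2 = a * ‖x - p‖ ^ 2 + (1 - a) * ‖t - p‖ ^ 2 - a * (1 - a) * ‖x - t‖ ^ 2 := by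
    rw [← sub_sub_sub_cancel_right x t p, ← norm_smul_add_one_sub_smul_sq, hy]
    congr 2; module
  have hw' : ‖w - p‖ ^ 2 = β * ‖u - p‖ ^ 2 + (1 - β) * ‖v - p‖ ^ 2 - β * (1 - β) * ‖u - v‖ ^ 2 := by
    rw [← sub_sub_sub_cancel_right u v p, ← norm_smul_add_one_sub_smul_sq, hw]
    congr 2; module
  have ht' : ‖t - p‖ ^ 2 ≤ ‖x - p‖ ^ 2 := pow_le_pow_left₀ (norm_nonneg _) ht 2
  have hest : β * ‖u - y‖ ^ 2 + (1 - β) * ‖v - y‖ ^ 2 + a * (1 - a) * ‖x - t‖ ^ 2 ≤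
      ‖x - p‖ ^ 2 - ‖w - p‖ ^ 2 := by
    nlinarith [mul_nonneg hβ₀ (sub_nonneg.2 hβ₁), mul_nonneg (sub_nonneg.2 ha₁) (sub_nonneg.2 ht'),
      sq_nonneg ‖u - v‖]
  refine ⟨(sq_le_sq₀ (norm_nonneg _) (norm_nonneg _)).1 ?_, hest⟩
  nlinarith [mul_nonneg hβ₀ (sq_nonneg ‖u - y‖), mul_nonneg (sub_nonneg.2 hβ₁) (sq_nonneg ‖v - y‖),
    mul_nonneg (mul_nonneg ha₀ (sub_nonneg.2 ha₁)) (sq_nonneg ‖x - t‖)]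

theorem cauchySeq_of_forall_norm_sub_le_antitone [CompleteSpace H] {D : ℕ → Set H}
    (hD : Antitone D) (hconv : ∀ n, Convex ℝ (D n)) {p x₀ : H} (hp : ∀ n, p ∈ D n)
    {z : ℕ → H} (hz : ∀ n, z n ∈ D n) (hmin : ∀ n, ∀ w ∈ D n, ‖z n - x₀‖ ≤ ‖w - x₀‖) :
    CauchySeq z := by
  set a : ℕ → ℝ := fun n => ‖z n - x₀‖ ^ 2
  have hgap : ∀ n m, n ≤ m → ‖z m - z n‖ ^ 2 ≤ a m - a n := fun n m hnm => by
    have := sq_norm_sub_add_sq_norm_sub_le_of_forall_norm_sub_le (hconv n) (hz n) (hmin n)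
      (hD hnm (hz m))
    simp only [a]; linarith
  have hmono : Monotone a := fun n m hnm => by linarith [hgap n m hnm, sq_nonneg ‖z m - z n‖]
  have hbdd : BddAbove (Set.range a) :=
    ⟨‖p - x₀‖ ^ 2, Set.forall_mem_range.2 fun n =>
      pow_le_pow_left₀ (norm_nonneg _) (hmin n p (hp n)) 2⟩
  have hlim := tendsto_atTop_ciSup hmono hbdd
  refine Metric.cauchySeq_iff'.2 fun ε hε => ?_
  obtain ⟨N, hN⟩ := (hlim.eventually (lt_mem_nhds (sub_lt_self _ (pow_pos hε 2)))).exists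
  refine ⟨N, fun n hn => ?_⟩
  rw [dist_eq_norm, ← sq_lt_sq₀ (norm_nonneg _) hε.le]
  linarith [hgap N n hn, le_ciSup hbdd n]

theorem antitone_of_succ_eq_sep {α : Type*} {s : ℕ → Set α} {p : ℕ → α → Prop}
    (h : ∀ n, s (n + 1) = {z ∈ s n | p n z}) : Antitone s :=
  antitone_nat_of_succ_le fun n => h n ▸ Set.sep_subset _ _

section HybridSets

variable {C : Set H} {Cs : ℕ → Set H} {x w : ℕ → H}

theorem hybridSets_isClosed_convex (hCcl : IsClosed C) (hCcv : Convex ℝ C) (hC0 : Cs 0 = C)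
    (hCs : ∀ n, Cs (n + 1) = {z ∈ Cs n | ‖z - w n‖ ≤ ‖z - x n‖}) (n : ℕ) :
    IsClosed (Cs n) ∧ Convex ℝ (Cs n) := by
  induction n with
  | zero => exact hC0 ▸ ⟨hCcl, hCcv⟩
  | succ n ih =>
    rw [hCs n]
    exact ⟨ih.1.inter (isClosed_le (continuous_id.sub continuous_const).norm
        (continuous_id.sub continuous_const).norm),
      ih.2.inter (convex_setOf_norm_sub_le_norm_sub _ _)⟩

theorem hybridSets_invariant {P : Set H → H → H} (hP : IsMetricProjection P) {F : Set H}
    (hCcl : IsClosed C) (hCcv : Convex ℝ C) (hC0 : Cs 0 = C)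
    (hCs : ∀ n, Cs (n + 1) = {z ∈ Cs n | ‖z - w n‖ ≤ ‖z - x n‖})
    (hx : ∀ n, x (n + 1) = P (Cs (n + 1)) (x 0)) (hx0 : x 0 ∈ C) (hFC : F ⊆ C)
    (hFne : F.Nonempty) (hw : ∀ n, x n ∈ C → ∀ p ∈ F, ‖w n - p‖ ≤ ‖x n - p‖) (n : ℕ) :
    F ⊆ Cs n ∧ x n ∈ Cs n := by
  induction n with
  | zero => exact hC0 ▸ ⟨hFC, hx0⟩
  | succ n ih =>
    have hxn : x n ∈ C := hC0 ▸ antitone_of_succ_eq_sep hCs (Nat.zero_le n) ih.2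
    have hF : F ⊆ Cs (n + 1) := fun p hp => by
      rw [hCs n]
      exact ⟨ih.1 hp, by rw [norm_sub_rev p, norm_sub_rev p]; exact hw n hxn p hp⟩
    obtain ⟨hcl, hcv⟩ := hybridSets_isClosed_convex hCcl hCcv hC0 hCs (n + 1)
    exact ⟨hF, hx n ▸ (hP _ (hFne.mono hF) hcl hcv (x 0)).1⟩

theorem hybridSets_tendsto [CompleteSpace H] {P : Set H → H → H} (hP : IsMetricProjection P)
    {F : Set H} (hCcl : IsClosed C) (hCcv : Convex ℝ C) (hC0 : Cs 0 = C)
    (hCs : ∀ n, Cs (n + 1) = {z ∈ Cs n | ‖z - w n‖ ≤ ‖z - x n‖})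
    (hx : ∀ n, x (n + 1) = P (Cs (n + 1)) (x 0)) (hx0 : x 0 ∈ C) (hFC : F ⊆ C)
    (hFne : F.Nonempty) (hw : ∀ n, x n ∈ C → ∀ p ∈ F, ‖w n - p‖ ≤ ‖x n - p‖) :
    (∀ n, x n ∈ C) ∧ ∃ q, Tendsto x atTop (𝓝 q) ∧ Tendsto w atTop (𝓝 q) := by
  have hinv := hybridSets_invariant hP hCcl hCcv hC0 hCs hx hx0 hFC hFne hw
  have hanti := antitone_of_succ_eq_sep hCs
  obtain ⟨p, hp⟩ := hFne
  have hmin : ∀ n, ∀ z ∈ Cs (n + 1), ‖x (n + 1) - x 0‖ ≤ ‖z - x 0‖ := fun n => by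
    obtain ⟨hcl, hcv⟩ := hybridSets_isClosed_convex hCcl hCcv hC0 hCs (n + 1)
    exact hx n ▸ (hP _ ⟨p, (hinv (n + 1)).1 hp⟩ hcl hcv (x 0)).2
  have hcauchy : CauchySeq fun n => x (n + 1) :=
    cauchySeq_of_forall_norm_sub_le_antitone (fun n m hnm => hanti (Nat.succ_le_succ hnm))
      (fun n => (hybridSets_isClosed_convex hCcl hCcv hC0 hCs (n + 1)).2)
      (fun n => (hinv (n + 1)).1 hp) (fun n => (hinv (n + 1)).2) hmin
  obtain ⟨q, hq⟩ := cauchySeq_tendsto_of_complete hcauchy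
  have hxq : Tendsto x atTop (𝓝 q) := (tendsto_add_atTop_iff_nat 1).1 hq
  have hwx : ∀ n, ‖w n - x (n + 1)‖ ≤ ‖x (n + 1) - x n‖ := fun n => by
    have := (hinv (n + 1)).2
    rw [hCs n] at this
    exact norm_sub_rev (w n) _ ▸ this.2
  refine ⟨fun n => hC0 ▸ hanti (Nat.zero_le n) (hinv n).2, q, hxq, ?_⟩
  have hstep : Tendsto (fun n => x (n + 1) - x n) atTop (𝓝 0) := by
    simpa using hq.sub hxq
  have hwx' : Tendsto (fun n => w n - x (n + 1)) atTop (𝓝 0) :=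
    squeeze_zero_norm hwx (by simpa using hstep.norm)
  simpa using hwx'.add hq

end HybridSets

theorem tendsto_zero_of_mul_norm_sq_le {ι E : Type*} [SeminormedAddCommGroup E] {l : Filter ι}
    {e : ι → E} {s : ι → ℝ} {c : ℝ} (hc : 0 < c) (h : ∀ᶠ i in l, c * ‖e i‖ ^ 2 ≤ s i)
    (hs : Tendsto s l (𝓝 0)) : Tendsto e l (𝓝 0) := by
  refine tendsto_zero_iff_norm_tendsto_zero.2 (squeeze_zero' (.of_forall fun i => norm_nonneg _)
    (h.mono fun i hi => Real.le_sqrt_of_sq_le ((le_div_iff₀' hc).2 hi)) ?_)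
  simpa using (hs.div_const c).sqrt

theorem hybrid_residuals_tendsto_zero {E : Type*} [SeminormedAddCommGroup E] {a b c : ℕ → E}
    {γ s : ℕ → ℝ} {β : ℝ} (hβ : β ∈ Set.Ioo 0 1) (hγ₀ : ∀ n, 0 ≤ γ n)
    (hγ : 0 < liminf γ atTop)
    (h : ∀ n, β * ‖a n‖ ^ 2 + (1 - β) * ‖b n‖ ^ 2 + γ n * ‖c n‖ ^ 2 ≤ s n)
    (hs : Tendsto s atTop (𝓝 0)) :
    Tendsto a atTop (𝓝 0) ∧ Tendsto b atTop (𝓝 0) ∧ Tendsto c atTop (𝓝 0) := by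
  obtain ⟨hβ₀, hβ₁⟩ := hβ
  have hγ' : ∀ᶠ n in atTop, liminf γ atTop / 2 < γ n :=
    eventually_lt_of_lt_liminf (half_lt_self hγ) ⟨0, eventually_map.2 (.of_forall hγ₀)⟩
  refine ⟨tendsto_zero_of_mul_norm_sq_le hβ₀ (.of_forall fun n => ?_) hs,
    tendsto_zero_of_mul_norm_sq_le (sub_pos.2 hβ₁) (.of_forall fun n => ?_) hs,
    tendsto_zero_of_mul_norm_sq_le (half_pos hγ) (hγ'.mono fun n hn => ?_) hs⟩ <;>
  nlinarith [h n, hγ₀ n, sq_nonneg ‖a n‖, sq_nonneg ‖b n‖, sq_nonneg ‖c n‖]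

theorem tendsto_smul_add_one_sub_smul {ι E : Type*} [NormedAddCommGroup E] [NormedSpace ℝ E]
    {l : Filter ι} {a : ι → ℝ} {x t : ι → E} {q : E} (ha : ∀ i, a i ∈ Set.Icc 0 1)
    (hx : Tendsto x l (𝓝 q)) (hxt : Tendsto (fun i => x i - t i) l (𝓝 0)) :
    Tendsto (fun i => a i • x i + (1 - a i) • t i) l (𝓝 q) := by
  have hbdd : IsBoundedUnder (· ≤ ·) l (norm ∘ fun i => 1 - a i) :=
    ⟨1, eventually_map.2 (.of_forall fun i => by
      simp only [Function.comp_apply, Real.norm_eq_abs]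
      exact abs_le.2 ⟨by linarith [(ha i).2], by linarith [(ha i).1]⟩)⟩
  have hcomb : (fun i => a i • x i + (1 - a i) • t i) = fun i => x i - (1 - a i) • (x i - t i) := by
    funext i; module
  simpa [hcomb] using hx.sub (hbdd.smul_tendsto_zero hxt)

theorem apply_eq_of_tendsto_sub_apply_cyclic {E : Type*} [NormedAddCommGroup E] {d : ℕ}
    (hd : 0 < d) {T : Fin d → E → E} {C : Set E} {x : ℕ → E} {q : E} (hxC : ∀ n, x n ∈ C)
    (hT : ∀ j, ContinuousOn (T j) C) (hqC : q ∈ C) (hxq : Tendsto x atTop (𝓝 q))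
    (hres : Tendsto (fun n => x n - T ⟨(n + 1) % d, Nat.mod_lt _ hd⟩ (x n)) atTop (𝓝 0))
    (j : Fin d) : T j q = q := by
  have hfreq : ∃ᶠ n in atTop, (n + 1) % d = j := frequently_atTop.2 fun N =>
    ⟨d * N + j + (d - 1), by nlinarith, by
      rw [show d * N + j + (d - 1) + 1 = j + d * (N + 1) by rw [mul_add]; omega,
        Nat.add_mul_mod_self_left, Nat.mod_eq_of_lt j.isLt]⟩
  obtain ⟨φ, hφ, hφj⟩ := extraction_of_frequently_atTop hfreq
  have hxφ : Tendsto (x ∘ φ) atTop (𝓝 q) := hxq.comp hφ.tendsto_atTop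
  have hresφ : Tendsto (fun k => x (φ k) - T j (x (φ k))) atTop (𝓝 0) := by
    refine (hres.comp hφ.tendsto_atTop).congr fun k => ?_
    simp only [Function.comp_apply, show (⟨(φ k + 1) % d, Nat.mod_lt _ hd⟩ : Fin d) = j from
      Fin.ext (hφj k)]
  have hTq : Tendsto (fun k => T j (x (φ k))) atTop (𝓝 (T j q)) :=
    (hT j q hqC).tendsto.comp (tendsto_nhdsWithin_iff.2 ⟨hxφ, .of_forall fun k => hxC _⟩)
  exact tendsto_nhds_unique hTq (by simpa using hxφ.sub hresφ)

section Equilibrium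

variable {C : Set H} {f : H → H → ℝ}

theorem mem_EPset_of_forall_le_zero (hf : BifunConds C f) (hCcv : Convex ℝ C) {q : H}
    (hqC : q ∈ C) (h : ∀ z ∈ C, f z q ≤ 0) : q ∈ EPset C f := by
  obtain ⟨hA1, -, hA3, hA4⟩ := hf
  refine ⟨hqC, fun v hv => ?_⟩
  -- `0 = f z z ≤ t f z v + (1 - t) f z q ≤ t f z v` at `z = t v + (1 - t) q`
  have hseg : ∀ t ∈ Set.Ioc (0 : ℝ) 1, 0 ≤ f (t • v + (1 - t) • q) v := by
    rintro t ⟨ht₀, ht₁⟩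
    have hz : t • v + (1 - t) • q ∈ C := hCcv hv hqC ht₀.le (sub_nonneg.2 ht₁) (add_sub_cancel t 1)
    have hconv := (hA4 _ hz).1.2 hv hqC ht₀.le (sub_nonneg.2 ht₁) (add_sub_cancel t 1)
    rw [hA1 _ hz, smul_eq_mul, smul_eq_mul] at hconv
    nlinarith [h _ hz]
  refine le_trans ?_ (hA3 q hqC v hv v hv)
  rw [limsup_eq]
  refine Real.sInf_nonneg fun b (hb : ∀ᶠ s in 𝓝[>] (0 : ℝ), _ ≤ b) => ?_
  obtain ⟨t, htb, ht⟩ := (hb.and (Ioc_mem_nhdsGT_of_mem ⟨le_rfl, zero_lt_one⟩)).exists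
  exact (hseg t ht).trans htb

theorem le_zero_of_tendsto_resolvent (hf : BifunConds C f) {c₁ : ℝ} (hc₁ : 0 < c₁)
    {r : ℕ → ℝ} (hr : ∀ n, c₁ ≤ r n) {u y : ℕ → H} {q : H}
    (hu : ∀ n, u n ∈ C ∧ ∀ z ∈ C, 0 ≤ f (u n) z + (1 / r n) * ⟪z - u n, u n - y n⟫)
    (huq : Tendsto u atTop (𝓝 q)) (huy : Tendsto (fun n => u n - y n) atTop (𝓝 0))
    (hqC : q ∈ C) {z : H} (hz : z ∈ C) : f z q ≤ 0 := by
  set c : ℕ → ℝ := fun n => (1 / r n) * ⟪z - u n, u n - y n⟫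
  have hc : Tendsto c atTop (𝓝 0) := by
    have hinner : Tendsto (fun n => ⟪z - u n, u n - y n⟫) atTop (𝓝 0) := by
      simpa using (tendsto_const_nhds.sub huq).inner huy
    refine squeeze_zero_norm (fun n => ?_)
      (by simpa only [norm_zero, mul_zero] using hinner.norm.const_mul (1 / c₁))
    rw [norm_mul, Real.norm_of_nonneg (one_div_pos.2 (hc₁.trans_le (hr n))).le]
    exact mul_le_mul_of_nonneg_right (one_div_le_one_div_of_le hc₁ (hr n)) (norm_nonneg _)
  have hle : ∀ n, f z (u n) ≤ c n := fun n => by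
    linarith [hf.2.1 z hz (u n) (hu n).1, (hu n).2 z hz]
  by_contra! hpos
  have hlsc : ∀ᶠ n in atTop, f z q / 2 < f z (u n) :=
    (tendsto_nhdsWithin_iff.2 ⟨huq, .of_forall fun n => (hu n).1⟩).eventually
      ((hf.2.2.2 z hz).2 q hqC _ (half_lt_self hpos))
  obtain ⟨n, hn, hcn⟩ := (hlsc.and (hc.eventually (gt_mem_nhds (half_pos hpos)))).exists
  linarith [hle n]

theorem mem_EPset_of_tendsto_resolvent (hf : BifunConds C f) (hCcv : Convex ℝ C) {c₁ : ℝ}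
    (hc₁ : 0 < c₁) {r : ℕ → ℝ} (hr : ∀ n, c₁ ≤ r n) {u y : ℕ → H} {q : H}
    (hu : ∀ n, u n ∈ C ∧ ∀ z ∈ C, 0 ≤ f (u n) z + (1 / r n) * ⟪z - u n, u n - y n⟫)
    (huq : Tendsto u atTop (𝓝 q)) (huy : Tendsto (fun n => u n - y n) atTop (𝓝 0))
    (hqC : q ∈ C) : q ∈ EPset C f :=
  mem_EPset_of_forall_le_zero hf hCcv hqC fun _ hz =>
    le_zero_of_tendsto_resolvent hf hc₁ hr hu huq huy hqC hz

end Equilibrium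

theorem statement_8_general
    {H : Type*} [NormedAddCommGroup H] [InnerProductSpace ℝ H] [CompleteSpace H]
    (P : Set H → H → H) (hP : IsMetricProjection P)
    (C : Set H) (hCcl : IsClosed C) (hCcv : Convex ℝ C)
    (f1 f2 : H → H → ℝ) (hf1 : BifunConds C f1) (hf2 : BifunConds C f2)
    (d : ℕ) (hd : 0 < d)
    (T : Fin d → H → H)
    (hTcont : ∀ j, ContinuousOn (T j) C)
    (hTqne : ∀ j, QuasiNonexpansive C (T j))
    (F : Set H)
    (hF : F = (⋂ j, {p ∈ C | T j p = p}) ∩ (EPset C f1 ∩ EPset C f2))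
    (hFne : F.Nonempty)
    (c₁ β : ℝ) (hc₁ : 0 < c₁) (hβ : β ∈ Set.Ioo (0 : ℝ) 1)
    (α r : ℕ → ℝ)
    (hα : ∀ n, α n ∈ Set.Ioo (0 : ℝ) 1)
    (hliminf : 0 < Filter.liminf (fun n => α n * (1 - α n)) atTop)
    (hr : ∀ n, c₁ ≤ r n)
    (x y u v w : ℕ → H) (Cs : ℕ → Set H)
    (hC0 : Cs 0 = C) (hx0 : x 0 ∈ C)
    (hy : ∀ n, y n = α n • x n + (1 - α n) • T ⟨(n + 1) % d, Nat.mod_lt _ hd⟩ (x n))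
    (hu : ∀ n, u n ∈ C ∧ ∀ yy ∈ C,
      0 ≤ f1 (u n) yy + (1 / r n) * ⟪yy - u n, u n - y n⟫)
    (hv : ∀ n, v n ∈ C ∧ ∀ yy ∈ C,
      0 ≤ f2 (v n) yy + (1 / r n) * ⟪yy - v n, v n - y n⟫)
    (hw : ∀ n, w n = β • u n + (1 - β) • v n)
    (hCs : ∀ n, Cs (n + 1) = {zz ∈ Cs n | ‖zz - w n‖ ≤ ‖zz - x n‖})
    (hx : ∀ n, x (n + 1) = P (Cs (n + 1)) (x 0)) :
    ∃ p ∈ F, Tendsto x atTop (𝓝 p) := by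
  have hrpos : ∀ n, 0 < r n := fun n => hc₁.trans_le (hr n)
  have hFC : F ⊆ C := fun p hp => (hF ▸ hp).2.1.1
  have hstep : ∀ n, x n ∈ C → ∀ p ∈ F, ‖w n - p‖ ≤ ‖x n - p‖ ∧
      β * ‖u n - y n‖ ^ 2 + (1 - β) * ‖v n - y n‖ ^ 2 +
        α n * (1 - α n) * ‖x n - T ⟨(n + 1) % d, Nat.mod_lt _ hd⟩ (x n)‖ ^ 2 ≤
      ‖x n - p‖ ^ 2 - ‖w n - p‖ ^ 2 := fun n hxn p hp => by
    obtain ⟨hfix, hp₁, hp₂⟩ := hF ▸ hp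
    exact hybrid_step_estimate (Set.Ioo_subset_Icc_self (hα n)) (Set.Ioo_subset_Icc_self hβ)
      (hy n) (hw n) ((hTqne _).2 p hp₁.1 (Set.mem_iInter.1 hfix _).2 _ hxn)
      (sq_norm_sub_add_sq_norm_sub_le_of_resolvent hf1.2.1 (hrpos n) hp₁ (hu n).1 (hu n).2)
      (sq_norm_sub_add_sq_norm_sub_le_of_resolvent hf2.2.1 (hrpos n) hp₂ (hv n).1 (hv n).2)
  obtain ⟨hxC, q, hxq, hwq⟩ := hybridSets_tendsto hP hCcl hCcv hC0 hCs hx hx0 hFC hFne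
    fun n hxn p hp => (hstep n hxn p hp).1
  have hqC : q ∈ C := hCcl.mem_of_tendsto hxq (.of_forall hxC)
  obtain ⟨p₀, hp₀⟩ := hFne
  have hgap : Tendsto (fun n => ‖x n - p₀‖ ^ 2 - ‖w n - p₀‖ ^ 2) atTop (𝓝 0) := by
    simpa using ((hxq.sub_const p₀).norm.pow 2).sub ((hwq.sub_const p₀).norm.pow 2)
  obtain ⟨huy, hvy, hxT⟩ := hybrid_residuals_tendsto_zero hβ
    (fun n => mul_nonneg (hα n).1.le (sub_nonneg.2 (hα n).2.le)) hliminf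
    (fun n => (hstep n (hxC n) p₀ hp₀).2) hgap
  have hyq : Tendsto y atTop (𝓝 q) := funext hy ▸
    tendsto_smul_add_one_sub_smul (fun n => Set.Ioo_subset_Icc_self (hα n)) hxq hxT
  refine ⟨q, hF ▸ ⟨Set.mem_iInter.2 fun j => ⟨hqC, ?_⟩, ?_, ?_⟩, hxq⟩
  · exact apply_eq_of_tendsto_sub_apply_cyclic hd hxC hTcont hqC hxq hxT j
  · exact mem_EPset_of_tendsto_resolvent hf1 hCcv hc₁ hr hu (by simpa using huy.add hyq) huy hqC
  · exact mem_EPset_of_tendsto_resolvent hf2 hCcv hc₁ hr hv (by simpa using hvy.add hyq) hvy hqC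

/-- Corollary 6: strong convergence of the hybrid scheme (44) in a real Hilbert space. -/
theorem statement_8
    {H : Type*} [NormedAddCommGroup H] [InnerProductSpace ℝ H] [CompleteSpace H]
    (P : Set H → H → H) (hP : IsMetricProjection P)
    (C : Set H) (hCne : C.Nonempty) (hCcl : IsClosed C) (hCcv : Convex ℝ C)
    (f1 f2 : H → H → ℝ) (hf1 : BifunConds C f1) (hf2 : BifunConds C f2)
    (d : ℕ) (hd : 0 < d)
    (T : Fin d → H → H) (hTmaps : ∀ j, Set.MapsTo (T j) C C)
    (hTcont : ∀ j, ContinuousOn (T j) C)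
    (hTqne : ∀ j, QuasiNonexpansive C (T j))
    (F : Set H)
    (hF : F = (⋂ j, {p ∈ C | T j p = p}) ∩ (EPset C f1 ∩ EPset C f2))
    (hFne : F.Nonempty)
    (c₁ β : ℝ) (hc₁ : 0 < c₁) (hβ : β ∈ Set.Ioo (0 : ℝ) 1)
    (α r : ℕ → ℝ)
    (hα : ∀ n, α n ∈ Set.Ioo (0 : ℝ) 1)
    (hliminf : 0 < Filter.liminf (fun n => α n * (1 - α n)) atTop)
    (hr : ∀ n, c₁ ≤ r n)
    (x y u v w : ℕ → H) (Cs : ℕ → Set H)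
    (hC0 : Cs 0 = C) (hx0 : x 0 ∈ C)
    (hy : ∀ n, y n = α n • x n + (1 - α n) • T ⟨(n + 1) % d, Nat.mod_lt _ hd⟩ (x n))
    (hu : ∀ n, u n ∈ C ∧ ∀ yy ∈ C,
      0 ≤ f1 (u n) yy + (1 / r n) * ⟪yy - u n, u n - y n⟫)
    (hv : ∀ n, v n ∈ C ∧ ∀ yy ∈ C,
      0 ≤ f2 (v n) yy + (1 / r n) * ⟪yy - v n, v n - y n⟫)
    (hw : ∀ n, w n = β • u n + (1 - β) • v n)
    (hCs : ∀ n, Cs (n + 1) = {zz ∈ Cs n | ‖zz - w n‖ ≤ ‖zz - x n‖})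
    (hx : ∀ n, x (n + 1) = P (Cs (n + 1)) (x 0)) :
    ∃ p ∈ F, Tendsto x atTop (𝓝 p) :=
  statement_8_general P hP C hCcl hCcv f1 f2 hf1 hf2 d hd T hTcont hTqne F hF hFne c₁ β hc₁ hβ α r
    hα hliminf hr x y u v w Cs hC0 hx0 hy hu hv hw hCs hx
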